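/- Let A be a real symmetric n×n matrix, B a real symmetric positive definite n×n matrix, ω a nonzero real number, and M := ω⁻¹B. Let B^{1/2} denote the positive semidefinite square root of B and let λ_max be the greatest element of the real spectrum of the symmetric matrix B^{−1/2}·A·B^{−1/2} (i.e., λ_max is an eigenvalue of B^{−1/2}·A·B^{−1/2} and every eigenvalue of B^{−1/2}·A·B^{−1/2} is at most λ_max). Then 2M − A is symmetric positive definite if and only if: (i) when λ_max > 0, ω ∈ (0, 2/λ_max); (ii) when λ_max < 0, ω < 2/λ_max or ω > 0 (i.e., ω ∉ [2/λ_max, 0]); (iii) when λ_max = 0, ω > 0. -/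

import Mathlib

/-!
With `S = B^{1/2}` and `C = S⁻¹ A S⁻¹`, one has `2M - A = S ((2/ω) I - C) S`. Congruence by the
invertible symmetric `S` preserves positive definiteness, and `(2/ω) I - C` is positive definite
exactly when `λ_max < 2/ω`; splitting by the signs of `ω` and `λ_max` gives the three cases.
-/

open Matrix

/-- A real symmetric matrix is positive definite: `vᵀPv > 0` for all nonzero `v`. -/
def Matrix.IsPD {n : ℕ} (P : Matrix (Fin n) (Fin n) ℝ) : Prop :=
  Pᵀ = P ∧ ∀ v : Fin n → ℝ, v ≠ 0 → 0 < v ⬝ᵥ (P *ᵥ v)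

open scoped ComplexOrder

theorem lt_two_div_iff_sign_cases {ω l : ℝ} (hω : ω ≠ 0) :
    l < 2 / ω ↔
      ((0 < l ∧ 0 < ω ∧ ω < 2 / l) ∨ (l < 0 ∧ (ω < 2 / l ∨ 0 < ω)) ∨ (l = 0 ∧ 0 < ω)) := by
  rcases hω.lt_or_gt with hω | hω <;> rcases lt_trichotomy l 0 with hl | rfl | hl
  · rw [lt_div_iff_of_neg hω, lt_div_iff_of_neg hl, mul_comm]
    simp [hl, hω.not_gt]
  · simp [hω.not_gt]
  · have : 2 / ω < 0 := div_neg_of_pos_of_neg two_pos hω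
    exact iff_of_false (by linarith) (by simp [hl.not_gt, hω.not_gt, hl.ne'])
  · simp [hl, hω, (div_pos two_pos hω).trans' hl]
  · simp [hω]
  · rw [lt_div_iff₀ hω, lt_div_iff₀ hl, mul_comm]
    simp [hl, hω, hl.not_gt, hl.ne']

namespace Matrix

theorem isPD_iff_posDef {m : ℕ} {P : Matrix (Fin m) (Fin m) ℝ} : P.IsPD ↔ P.PosDef := by
  simp [IsPD, posDef_iff_dotProduct_mulVec, IsHermitian]

variable {n : Type*} [Fintype n] [DecidableEq n]

theorem mul_algebraMap_sub_inv_mul_mul_inv_mul {R : Type*} [CommRing R] {S : Matrix n n R}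
    (hS : IsUnit S) (A : Matrix n n R) (c : R) :
    S * (algebraMap R _ c - S⁻¹ * A * S⁻¹) * S = c • (S * S) - A := by
  have hdet := (isUnit_iff_isUnit_det S).mp hS
  rw [Algebra.algebraMap_eq_smul_one, mul_sub, sub_mul, mul_smul_comm, mul_one, smul_mul_assoc,
    ← mul_assoc, ← mul_assoc, mul_nonsing_inv _ hdet, one_mul, mul_assoc, nonsing_inv_mul _ hdet,
    mul_one]

variable {𝕜 : Type*} [RCLike 𝕜]

theorem IsHermitian.posDef_iff_forall_mem_spectrum_pos {A : Matrix n n 𝕜} (hA : A.IsHermitian) :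
    A.PosDef ↔ ∀ x ∈ spectrum ℝ A, 0 < x := by
  simp [hA.posDef_iff_eigenvalues_pos, hA.spectrum_real_eq_range_eigenvalues]

theorem IsHermitian.posDef_algebraMap_sub_iff {A : Matrix n n 𝕜} (hA : A.IsHermitian) {l : ℝ}
    (hl : IsGreatest (spectrum ℝ A) l) (t : ℝ) :
    (algebraMap ℝ _ t - A).PosDef ↔ l < t := by
  have hherm : (algebraMap ℝ (Matrix n n 𝕜) t - A).IsHermitian :=
    (IsSelfAdjoint.algebraMap _ (.all t)).sub hA
  rw [hherm.posDef_iff_forall_mem_spectrum_pos, ← spectrum.singleton_sub_eq]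
  simp only [Set.singleton_sub, Set.forall_mem_image, sub_pos]
  exact ⟨fun h ↦ h hl.1, fun h _ hx ↦ (hl.2 hx).trans_lt h⟩

end Matrix

theorem stmt_11_general {n : ℕ} (A B S : Matrix (Fin n) (Fin n) ℝ)
    (hA : Aᵀ = A) (hB : B.IsPD)
    -- `S` is the positive semidefinite square root `B^{1/2}` of `B`
    (hS : Sᵀ = S) (hSsq : S * S = B)
    (ω : ℝ) (hω : ω ≠ 0)
    -- `lmax` is the greatest element of the real spectrum of `B^{-1/2} A B^{-1/2}`
    (lmax : ℝ)
    (hmem : lmax ∈ spectrum ℝ (S⁻¹ * A * S⁻¹))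
    (hmax : ∀ lam ∈ spectrum ℝ (S⁻¹ * A * S⁻¹), lam ≤ lmax) :
    ((2 : ℝ) • (ω⁻¹ • B) - A).IsPD ↔
      ((0 < lmax ∧ 0 < ω ∧ ω < 2 / lmax) ∨
       (lmax < 0 ∧ (ω < 2 / lmax ∨ 0 < ω)) ∨
       (lmax = 0 ∧ 0 < ω)) := by
  have hSunit : IsUnit S := isUnit_of_mul_isUnit_left (hSsq ▸ (isPD_iff_posDef.mp hB).isUnit)
  have hstar : star S = S := hS
  have hC : (S⁻¹ * A * S⁻¹).IsHermitian := by
    have hSinv : S⁻¹ᴴ = S⁻¹ := by rw [conjTranspose_nonsing_inv, ← star_eq_conjTranspose, hstar]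
    simpa only [hSinv] using isHermitian_conjTranspose_mul_mul S⁻¹ hA
  have hcongr : (2 : ℝ) • (ω⁻¹ • B) - A =
      S * (algebraMap ℝ _ (2 / ω) - S⁻¹ * A * S⁻¹) * star S := by
    rw [hstar, mul_algebraMap_sub_inv_mul_mul_inv_mul hSunit, hSsq, smul_smul, div_eq_mul_inv]
  rw [isPD_iff_posDef, hcongr, hSunit.posDef_star_right_conjugate_iff,
    hC.posDef_algebraMap_sub_iff ⟨hmem, hmax⟩, lt_two_div_iff_sign_cases hω]

theorem stmt_11 {n : ℕ} (A B S : Matrix (Fin n) (Fin n) ℝ)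
    (hA : Aᵀ = A) (hB : B.IsPD)
    -- `S` is the positive semidefinite square root `B^{1/2}` of `B`
    (hS : Sᵀ = S) (hSpsd : ∀ v : Fin n → ℝ, 0 ≤ v ⬝ᵥ (S *ᵥ v)) (hSsq : S * S = B)
    (ω : ℝ) (hω : ω ≠ 0)
    -- `lmax` is the greatest element of the real spectrum of `B^{-1/2} A B^{-1/2}`
    (lmax : ℝ)
    (hmem : lmax ∈ spectrum ℝ (S⁻¹ * A * S⁻¹))
    (hmax : ∀ lam ∈ spectrum ℝ (S⁻¹ * A * S⁻¹), lam ≤ lmax) :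
    ((2 : ℝ) • (ω⁻¹ • B) - A).IsPD ↔
      ((0 < lmax ∧ 0 < ω ∧ ω < 2 / lmax) ∨
       (lmax < 0 ∧ (ω < 2 / lmax ∨ 0 < ω)) ∨
       (lmax = 0 ∧ 0 < ω)) :=
  stmt_11_general A B S hA hB hS hSsq ω hω lmax hmem hmax
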